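/- In the image persistence setting, the set 𝔅 of nonzero columns of F·R^φ is a filtration compatible basis for the pointwise intersection filtration φ_•(Z_*(C_•)) ∩ B_*(C'_•) (given by t ↦ φ(ker ∂|_{C_t}) ∩ ∂(C'_t)), and for all j with r^φ_j ≠ 0 one has supp_{φ_•(Z_*(C_•)) ∩ B_*(C'_•)}(F r^φ_j) = supp_{C_•}(r^φ_j) ∩ supp_{C'_•}(v^φ_j). -/

import Mathlib

/-- The support of an element `m` in a filtration `A` of subspaces:
the set of indices `t` with `m ∈ A t`. -/
def fsupp {F W : Type*} [Field F] [AddCommGroup W] [Module F W] {N : ℕ}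
    (A : Fin (N + 1) → Submodule F W) (m : W) : Set (Fin (N + 1)) :=
  {t | m ∈ A t}

/-- A set `B` is a filtration compatible basis for the filtration `A` if it is a basis
of the final space `A (Fin.last N)` such that `B ∩ A t` is a basis of `A t` for every `t`. -/
def IsCompatBasis {F W : Type*} [Field F] [AddCommGroup W] [Module F W] {N : ℕ}
    (A : Fin (N + 1) → Submodule F W) (B : Set W) : Prop :=
  B ⊆ ↑(A (Fin.last N)) ∧
  LinearIndependent F ((↑) : B → W) ∧
  ∀ t, Submodule.span F (B ∩ ↑(A t)) = A t

/-- The `j`-th column of a matrix. -/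
def matCol {F : Type*} [Field F] {n m : ℕ} (X : Matrix (Fin n) (Fin m) F) (j : Fin m) :
    Fin n → F :=
  fun i => X i j

open Classical in
/-- The pivot of a column vector: the largest index at which it has a nonzero entry
(`⊥` for the zero vector). -/
noncomputable def pivFin {F : Type*} [Field F] {n : ℕ} (v : Fin n → F) : WithBot (Fin n) :=
  (Finset.univ.filter fun i => v i ≠ 0).max

/-- A matrix is reduced if no two nonzero columns have the same pivot. -/
def IsReducedMat {F : Type*} [Field F] {n m : ℕ} (X : Matrix (Fin n) (Fin m) F) : Prop :=
  ∀ j k : Fin m, matCol X j ≠ 0 → matCol X k ≠ 0 →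
    pivFin (matCol X j) = pivFin (matCol X k) → j = k

/-- The set of indices occurring as pivots of nonzero columns of `X`. -/
def pivsSet {F : Type*} [Field F] {n m : ℕ} (X : Matrix (Fin n) (Fin m) F) : Set (Fin n) :=
  {i | ∃ j, matCol X j ≠ 0 ∧ pivFin (matCol X j) = ↑i}

/-- Upper-triangular square matrix. -/
def UpperTri {F : Type*} [Field F] {n : ℕ} (V : Matrix (Fin n) (Fin n) F) : Prop :=
  ∀ i j : Fin n, j < i → V i j = 0

section Aux
variable {F : Type*} [Field F] {n : ℕ}

lemma exists_ne_zero_of_ne_zero {v : Fin n → F} (h : v ≠ 0) : ∃ i, v i ≠ 0 := by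
  by_contra hc; push_neg at hc; exact h (funext fun i => hc i)

open Classical in
noncomputable def pivIdx (v : Fin n → F) (h : v ≠ 0) : Fin n :=
  (Finset.univ.filter fun i => v i ≠ 0).max'
    (by obtain ⟨i, hi⟩ := exists_ne_zero_of_ne_zero h; exact ⟨i, by simp [hi]⟩)

open Classical in
lemma pivFin_eq (v : Fin n → F) (h : v ≠ 0) : pivFin v = ↑(pivIdx v h) :=
  (Finset.coe_max' _).symm

open Classical in
lemma pivIdx_ne_zero (v : Fin n → F) (h : v ≠ 0) : v (pivIdx v h) ≠ 0 := by
  have := Finset.max'_mem (Finset.univ.filter fun i => v i ≠ 0)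
    (by obtain ⟨i, hi⟩ := exists_ne_zero_of_ne_zero h; exact ⟨i, by simp [hi]⟩)
  simpa [pivIdx] using (Finset.mem_filter.mp this).2

open Classical in
lemma le_pivIdx (v : Fin n → F) (h : v ≠ 0) {i : Fin n} (hi : v i ≠ 0) : i ≤ pivIdx v h :=
  Finset.le_max' _ i (by simp [hi])

lemma key_comb {ι : Type*} (u : ι → (Fin n → F)) (s : Finset ι) (hs : s.Nonempty)
    (hu : ∀ k ∈ s, u k ≠ 0)
    (hpiv : ∀ j ∈ s, ∀ k ∈ s, pivFin (u j) = pivFin (u k) → j = k)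
    (c : ι → F) (hc : ∀ k ∈ s, c k ≠ 0) :
    ∃ p : Fin n, (∑ k ∈ s, c k • u k) p ≠ 0 ∧ ∀ k ∈ s, ∀ i, u k i ≠ 0 → i ≤ p := by
  classical
  obtain ⟨k₀, hk₀s, hk₀max⟩ := s.exists_max_image (fun k => pivFin (u k)) hs
  refine ⟨pivIdx (u k₀) (hu k₀ hk₀s), ?_, ?_⟩
  · have hsum : (∑ k ∈ s, c k • u k) (pivIdx (u k₀) (hu k₀ hk₀s)) =
        c k₀ * u k₀ (pivIdx (u k₀) (hu k₀ hk₀s)) := by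
      rw [Finset.sum_apply]
      refine Finset.sum_eq_single_of_mem k₀ hk₀s ?_
      intro k hk hne
      have hzero : u k (pivIdx (u k₀) (hu k₀ hk₀s)) = 0 := by
        by_contra hnz
        have h1 : (pivIdx (u k₀) (hu k₀ hk₀s)) ≤ pivIdx (u k) (hu k hk) :=
          le_pivIdx (u k) (hu k hk) hnz
        have h2 : pivFin (u k) ≤ pivFin (u k₀) := hk₀max k hk
        rw [pivFin_eq (u k) (hu k hk), pivFin_eq (u k₀) (hu k₀ hk₀s)] at h2
        have h2' : pivIdx (u k) (hu k hk) ≤ pivIdx (u k₀) (hu k₀ hk₀s) :=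
          WithBot.coe_le_coe.mp h2
        have heq : pivIdx (u k) (hu k hk) = pivIdx (u k₀) (hu k₀ hk₀s) :=
          le_antisymm h2' h1
        exact hne (hpiv k hk k₀ hk₀s (by
          rw [pivFin_eq (u k) (hu k hk), pivFin_eq (u k₀) (hu k₀ hk₀s), heq]))
      simp [hzero]
    rw [hsum]
    exact mul_ne_zero (hc k₀ hk₀s) (pivIdx_ne_zero (u k₀) (hu k₀ hk₀s))
  · intro k hk i hi
    have h1 : (i : WithBot (Fin n)) ≤ pivFin (u k) := by
      rw [pivFin_eq (u k) (hu k hk)]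
      exact WithBot.coe_le_coe.mpr (le_pivIdx (u k) (hu k hk) hi)
    have h2 : pivFin (u k) ≤ pivFin (u k₀) := hk₀max k hk
    rw [pivFin_eq (u k₀) (hu k₀ hk₀s)] at h2
    exact WithBot.coe_le_coe.mp (h1.trans h2)

lemma sum_single_eq (v : Fin n → F) : ∑ i, v i • (Pi.single i (1 : F) : Fin n → F) = v := by
  funext j
  rw [Finset.sum_apply]
  simp [Pi.single_apply]

lemma mem_iff_coords {N : ℕ} (A : Fin (N + 1) → Submodule F (Fin n → F))
    (hcompat : IsCompatBasis A (Set.range fun j : Fin n => Pi.single j (1 : F)))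
    (t : Fin (N + 1)) (v : Fin n → F) :
    v ∈ A t ↔ ∀ i, v i ≠ 0 → Pi.single i (1 : F) ∈ A t := by
  constructor
  · intro hv
    have hspan := hcompat.2.2 t
    set S : Submodule F (Fin n → F) :=
      { carrier := {w | ∀ i, w i ≠ 0 → Pi.single i (1 : F) ∈ A t}
        add_mem' := by
          intro a b ha hb i hi
          by_cases h1 : a i ≠ 0
          · exact ha i h1
          · push_neg at h1
            exact hb i (by simpa [h1] using hi)
        zero_mem' := fun i hi => absurd rfl hi
        smul_mem' := by
          intro r a ha i hi
          exact ha i fun h0 => hi (by simp [h0]) } with hS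
    have hle : A t ≤ S := by
      rw [← hspan]
      refine Submodule.span_le.mpr ?_
      rintro x ⟨⟨j, rfl⟩, hx⟩
      intro i hi
      have hij : i = j := by
        by_contra hne
        simp [Pi.single_apply, hne] at hi
      subst hij; exact hx
    exact hle hv
  · intro h
    rw [← sum_single_eq v]
    refine Submodule.sum_mem _ fun i _ => ?_
    by_cases hvi : v i = 0
    · simp [hvi]
    · exact Submodule.smul_mem _ _ (h i hvi)

lemma upperTri_mulVec {N : ℕ} (M : Matrix (Fin n) (Fin n) F) (hM : UpperTri M)
    (A : Fin (N + 1) → Submodule F (Fin n → F))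
    (hcompat : IsCompatBasis A (Set.range fun j : Fin n => Pi.single j (1 : F)))
    (hord : ∀ j k : Fin n, j ≤ k →
      fsupp A (Pi.single k (1 : F)) ⊆ fsupp A (Pi.single j (1 : F)))
    (t : Fin (N + 1)) {v : Fin n → F} (hv : v ∈ A t) : M.mulVec v ∈ A t := by
  rw [mem_iff_coords A hcompat] at hv ⊢
  intro i hi
  have hex : ∃ k, M i k * v k ≠ 0 := by
    by_contra hc
    push_neg at hc
    exact hi (by simpa [Matrix.mulVec, dotProduct] using
      Finset.sum_eq_zero fun k _ => hc k)
  obtain ⟨k, hk⟩ := hex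
  have hMik : M i k ≠ 0 := fun h => hk (by simp [h])
  have hvk : v k ≠ 0 := fun h => hk (by simp [h])
  have hik : i ≤ k := by
    by_contra hlt
    exact hMik (hM i k (lt_of_not_ge hlt))
  exact hord i k hik (hv k hvk)

lemma matCol_mul {m : ℕ} (M : Matrix (Fin n) (Fin n) F) (X : Matrix (Fin n) (Fin m) F)
    (j : Fin m) : matCol (M * X) j = M.mulVec (matCol X j) := by
  funext i
  simp [matCol, Matrix.mul_apply, Matrix.mulVec, dotProduct]

lemma matCol_eq_mulVec_single (M : Matrix (Fin n) (Fin n) F) (j : Fin n) :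
    matCol M j = M.mulVec (Pi.single j (1 : F)) := by
  funext i
  simp [matCol, Matrix.mulVec_single]

lemma mulVec_eq_sum_cols (M : Matrix (Fin n) (Fin n) F) (c : Fin n → F) :
    M.mulVec c = ∑ k, c k • matCol M k := by
  funext i
  rw [Finset.sum_apply]
  simp [Matrix.mulVec, dotProduct, matCol, mul_comm]

lemma upperTri_inv (M : Matrix (Fin n) (Fin n) F) (hM : UpperTri M) (h : IsUnit M.det) :
    UpperTri M⁻¹ := by
  have : Invertible M := M.invertibleOfIsUnitDet h
  have hb : M.BlockTriangular (id : Fin n → Fin n) := fun i j hij => hM i j hij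
  have hinv := Matrix.blockTriangular_inv_of_blockTriangular hb
  exact fun i j hij => hinv hij

lemma mulVec_inj (M : Matrix (Fin n) (Fin n) F) (h : IsUnit M.det) :
    Function.Injective M.mulVec := by
  intro x y hxy
  have h2 := congrArg (M⁻¹.mulVec) hxy
  rwa [Matrix.mulVec_mulVec, Matrix.mulVec_mulVec, Matrix.nonsing_inv_mul M h,
    Matrix.one_mulVec, Matrix.one_mulVec] at h2

end Aux

/- Statement 11: the set 𝔅 of nonzero columns of F·R^φ is a filtration compatible basis
for the pointwise intersection φ_•(Z_*(C_•)) ∩ B_*(C'_•) : t ↦ φ(ker ∂|_{C_t}) ∩ ∂'(C'_t),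
with supp(F·r^φ_j) = supp_{C_•}(r^φ_j) ∩ supp_{C'_•}(v^φ_j). -/
theorem stmt_11 {F : Type*} [Field F] {n N : ℕ}
    -- filtrations of the chain complexes C and C', expressed in the coordinates of the
    -- filtration compatible ordered bases 𝔠 and 𝔠' (the standard bases)
    (A A' : Fin (N + 1) → Submodule F (Fin n → F))
    (hmono : Monotone A) (htop : A (Fin.last N) = ⊤)
    (hmono' : Monotone A') (htop' : A' (Fin.last N) = ⊤)
    (hcompat : IsCompatBasis A (Set.range fun j : Fin n => Pi.single j (1 : F)))
    (hord : ∀ j k : Fin n, j ≤ k →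
      fsupp A (Pi.single k (1 : F)) ⊆ fsupp A (Pi.single j (1 : F)))
    (hcompat' : IsCompatBasis A' (Set.range fun j : Fin n => Pi.single j (1 : F)))
    (hord' : ∀ j k : Fin n, j ≤ k →
      fsupp A' (Pi.single k (1 : F)) ⊆ fsupp A' (Pi.single j (1 : F)))
    -- graded chain complex structures, with filtration boundary matrices D and D'
    (deg deg' : Fin n → ℕ) (D D' : Matrix (Fin n) (Fin n) F)
    (hdeg : ∀ i j : Fin n, D i j ≠ 0 → deg j = deg i + 1)
    (hdeg' : ∀ i j : Fin n, D' i j ≠ 0 → deg' j = deg' i + 1)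
    (hD2 : D * D = 0) (hD'2 : D' * D' = 0)
    (hsubcx : ∀ t, (A t).map D.mulVecLin ≤ A t)
    (hsubcx' : ∀ t, (A' t).map D'.mulVecLin ≤ A' t)
    -- the monomorphism φ of filtrations of chain complexes, an isomorphism on the
    -- final filtration step, represented by the invertible matrix Fm
    (Fm : Matrix (Fin n) (Fin n) F) (hFm : IsUnit Fm.det)
    (hphifilt : ∀ t, (A t).map Fm.mulVecLin ≤ A' t)
    (hphiD : Fm * D = D' * Fm)
    -- the mixed-basis boundary matrix D^φ = D·F⁻¹ = F⁻¹·D'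
    (Dφ : Matrix (Fin n) (Fin n) F) (hDφ : Dφ = D * Fm⁻¹)
    -- the reductions R = D·V and R^φ = D^φ·V^φ
    (V Vφ R Rφ : Matrix (Fin n) (Fin n) F)
    (hR : R = D * V) (hRφ : Rφ = Dφ * Vφ)
    (hVut : UpperTri V) (hVunit : IsUnit V.det)
    (hVφut : UpperTri Vφ) (hVφunit : IsUnit Vφ.det)
    (hRred : IsReducedMat R) (hRφred : IsReducedMat Rφ) :
    IsCompatBasis
      (fun t => (((A t) ⊓ LinearMap.ker D.mulVecLin).map Fm.mulVecLin) ⊓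
        ((A' t).map D'.mulVecLin))
      {v | ∃ j, v = matCol (Fm * Rφ) j ∧ v ≠ 0} ∧
    ∀ j : Fin n, matCol Rφ j ≠ 0 →
      fsupp (fun t => (((A t) ⊓ LinearMap.ker D.mulVecLin).map Fm.mulVecLin) ⊓
          ((A' t).map D'.mulVecLin)) (matCol (Fm * Rφ) j) =
        fsupp A (matCol Rφ j) ∩ fsupp A' (matCol Vφ j) := by
  classical
  set W : Fin (N + 1) → Submodule F (Fin n → F) := fun t =>
    (((A t) ⊓ LinearMap.ker D.mulVecLin).map Fm.mulVecLin) ⊓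
      ((A' t).map D'.mulVecLin) with hW
  have memW : ∀ (t : Fin (N + 1)) (w : Fin n → F), w ∈ W t ↔
      ((∃ z, (z ∈ A t ∧ D.mulVec z = 0) ∧ Fm.mulVec z = w) ∧
        ∃ y, y ∈ A' t ∧ D'.mulVec y = w) := by
    intro t w
    simp only [hW, Submodule.mem_inf, Submodule.mem_map, LinearMap.mem_ker,
      Matrix.mulVecLin_apply]
  have hFmRφ : Fm * Rφ = D' * Vφ := by
    rw [hRφ, hDφ, ← Matrix.mul_assoc, ← Matrix.mul_assoc, hphiD,
      Matrix.mul_assoc D' Fm Fm⁻¹, Matrix.mul_nonsing_inv Fm hFm, Matrix.mul_one]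
  have hDRφ : D * Rφ = 0 := by
    rw [hRφ, hDφ, ← Matrix.mul_assoc, ← Matrix.mul_assoc, hD2, Matrix.zero_mul,
      Matrix.zero_mul]
  have hDr : ∀ j, D.mulVec (matCol Rφ j) = 0 := by
    intro j
    rw [← matCol_mul, hDRφ]
    funext i; simp [matCol]
  have hFmr : ∀ j, Fm.mulVec (matCol Rφ j) = D'.mulVec (matCol Vφ j) := by
    intro j
    rw [← matCol_mul, ← matCol_mul, hFmRφ]
  have hFminj := mulVec_inj Fm hFm
  have hVφinvUT : UpperTri Vφ⁻¹ := upperTri_inv Vφ hVφut hVφunit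
  have memA' : ∀ t v, v ∈ A' t ↔ ∀ i, v i ≠ 0 → Pi.single i (1 : F) ∈ A' t :=
    fun t v => mem_iff_coords A' hcompat' t v
  have hvmem : ∀ (t) (k : Fin n), Pi.single k (1 : F) ∈ A' t → matCol Vφ k ∈ A' t := by
    intro t k hk
    rw [matCol_eq_mulVec_single]
    exact upperTri_mulVec Vφ hVφut A' hcompat' hord' t hk
  have hS1 : ∀ (t) (j : Fin n), matCol Rφ j ∈ A t → matCol Vφ j ∈ A' t →
      Fm.mulVec (matCol Rφ j) ∈ W t := by
    intro t j h1 h2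
    exact (memW t _).mpr ⟨⟨matCol Rφ j, ⟨h1, hDr j⟩, rfl⟩, ⟨matCol Vφ j, h2, (hFmr j).symm⟩⟩
  have hsum_filter : ∀ c : Fin n → F,
      Rφ.mulVec c = ∑ k ∈ Finset.univ.filter (fun k => c k ≠ 0 ∧ matCol Rφ k ≠ 0),
        c k • matCol Rφ k := by
    intro c
    rw [mulVec_eq_sum_cols]
    refine (Finset.sum_subset (Finset.filter_subset _ _) ?_).symm
    intro k _ hk
    simp only [Finset.mem_filter, Finset.mem_univ, true_and, not_and_or, not_not] at hk
    rcases hk with h | h <;> simp [h]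
  have hmemsA : ∀ (t) (c : Fin n → F), Rφ.mulVec c ∈ A t →
      ∀ k, c k ≠ 0 → matCol Rφ k ≠ 0 → matCol Rφ k ∈ A t := by
    intro t c hz k hck hrk
    set s := Finset.univ.filter (fun k => c k ≠ 0 ∧ matCol Rφ k ≠ 0) with hs
    have hks : k ∈ s := by simp [hs, hck, hrk]
    obtain ⟨p, hp, hbound⟩ := key_comb (fun k => matCol Rφ k) s ⟨k, hks⟩
      (fun a ha => by rw [hs] at ha; exact (Finset.mem_filter.mp ha).2.2)
      (fun a ha b hb hab => hRφred a b
        (by rw [hs] at ha; exact (Finset.mem_filter.mp ha).2.2)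
        (by rw [hs] at hb; exact (Finset.mem_filter.mp hb).2.2) hab)
      c (fun a ha => by rw [hs] at ha; exact (Finset.mem_filter.mp ha).2.1)
    have hz' : (∑ a ∈ s, c a • matCol Rφ a) ∈ A t := by
      rw [hs, ← hsum_filter c]; exact hz
    have hPp : Pi.single p (1 : F) ∈ A t := (mem_iff_coords A hcompat t _).mp hz' p hp
    rw [mem_iff_coords A hcompat]
    intro i hi
    exact hord i p (hbound k hks i hi) hPp
  have hBW : ∀ t w, w ∈ W t →
      w ∈ Submodule.span F ({v | ∃ j, v = matCol (Fm * Rφ) j ∧ v ≠ 0} ∩ ↑(W t)) := by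
    intro t w hw
    obtain ⟨⟨z, ⟨hzA, hzD⟩, hzw⟩, y, hyA, hyw⟩ := (memW t w).mp hw
    set c := Vφ⁻¹.mulVec y with hcdef
    have hcA' : c ∈ A' t := upperTri_mulVec Vφ⁻¹ hVφinvUT A' hcompat' hord' t hyA
    have hVc : Vφ.mulVec c = y := by
      rw [hcdef, Matrix.mulVec_mulVec, Matrix.mul_nonsing_inv Vφ hVφunit, Matrix.one_mulVec]
    have hwc : Fm.mulVec (Rφ.mulVec c) = w := by
      rw [Matrix.mulVec_mulVec, hFmRφ, ← Matrix.mulVec_mulVec, hVc, hyw]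
    have hzc : z = Rφ.mulVec c := hFminj (by rw [hzw, hwc])
    set s := Finset.univ.filter (fun k => c k ≠ 0 ∧ matCol Rφ k ≠ 0) with hs
    have hzsum : Rφ.mulVec c = ∑ k ∈ s, c k • matCol Rφ k := by
      rw [hs]; exact hsum_filter c
    have hwsum : w = ∑ k ∈ s, c k • Fm.mulVec (matCol Rφ k) := by
      rw [← hzw, hzc, hzsum]
      simp only [← Matrix.mulVecLin_apply, map_sum, map_smul]
    rw [hwsum]
    refine Submodule.sum_mem _ fun k hk => ?_
    rw [hs] at hk
    obtain ⟨-, hck, hrk⟩ := Finset.mem_filter.mp hk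
    refine Submodule.smul_mem _ _ (Submodule.subset_span ?_)
    refine ⟨⟨k, (matCol_mul Fm Rφ k).symm,
      fun h0 => hrk (hFminj (h0.trans (Matrix.mulVec_zero Fm).symm))⟩, ?_⟩
    exact hS1 t k (hmemsA t c (by rw [← hzc]; exact hzA) k hck hrk)
      (hvmem t k ((memA' t c).mp hcA' k hck))
  constructor
  · refine ⟨?_, ?_, ?_⟩
    · rintro v ⟨j, rfl, hne⟩
      rw [matCol_mul]
      exact hS1 (Fin.last N) j (by rw [htop]; trivial) (by rw [htop']; trivial)
    · have hgind : LinearIndependent F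
          (fun j : {j : Fin n // matCol Rφ j ≠ 0} => Fm.mulVec (matCol Rφ (j : Fin n))) := by
        rw [Fintype.linearIndependent_iff]
        intro gc hgc j
        by_contra hgcj
        have hlin : Fm.mulVec (∑ k : {j : Fin n // matCol Rφ j ≠ 0},
            gc k • matCol Rφ (k : Fin n)) =
            ∑ k : {j : Fin n // matCol Rφ j ≠ 0}, gc k • Fm.mulVec (matCol Rφ (k : Fin n)) := by
          simp only [← Matrix.mulVecLin_apply, map_sum, map_smul]
        have h00 : (∑ k : {j : Fin n // matCol Rφ j ≠ 0}, gc k • matCol Rφ (k : Fin n)) = 0 :=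
          hFminj (by rw [hlin, hgc, Matrix.mulVec_zero])
        set s := Finset.univ.filter
          (fun k : {j : Fin n // matCol Rφ j ≠ 0} => gc k ≠ 0) with hs
        obtain ⟨p, hp, -⟩ := key_comb
          (fun k : {j : Fin n // matCol Rφ j ≠ 0} => matCol Rφ (k : Fin n)) s
          ⟨j, by simp [hs, hgcj]⟩ (fun a _ => a.2)
          (fun a _ b _ hab => Subtype.ext (hRφred a b a.2 b.2 hab))
          gc (fun a ha => by rw [hs] at ha; exact (Finset.mem_filter.mp ha).2)
        have hss : (∑ k ∈ s, gc k • matCol Rφ (k : Fin n)) = 0 := by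
          refine (Finset.sum_subset (Finset.subset_univ _) ?_).trans h00
          intro k _ hk
          rw [hs] at hk
          simp only [Finset.mem_filter, Finset.mem_univ, true_and, not_not] at hk
          simp [hk]
        rw [hss] at hp
        exact hp rfl
      have hset : {v : Fin n → F | ∃ j, v = matCol (Fm * Rφ) j ∧ v ≠ 0} =
          Set.range (fun j : {j : Fin n // matCol Rφ j ≠ 0} =>
            Fm.mulVec (matCol Rφ (j : Fin n))) := by
        ext v
        constructor
        · rintro ⟨j, rfl, hne⟩
          exact ⟨⟨j, fun h0 => hne (by rw [matCol_mul, h0, Matrix.mulVec_zero])⟩,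
            (matCol_mul Fm Rφ j).symm⟩
        · rintro ⟨⟨j, hj⟩, rfl⟩
          exact ⟨j, matCol_mul Fm Rφ j,
            fun h0 => hj (hFminj (h0.trans (Matrix.mulVec_zero Fm).symm))⟩
      rw [hset]
      exact hgind.linearIndepOn_id
    · intro t
      apply le_antisymm
      · exact Submodule.span_le.mpr Set.inter_subset_right
      · intro w hw
        exact hBW t w hw
  · intro j hj
    ext t
    simp only [fsupp, Set.mem_setOf_eq, Set.mem_inter_iff]
    constructor
    · intro hw
      rw [matCol_mul] at hw
      obtain ⟨⟨z, ⟨hzA, hzD⟩, hzw⟩, y, hyA, hyw⟩ := (memW t _).mp hw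
      have hz : z = matCol Rφ j := hFminj hzw
      constructor
      · rw [← hz]; exact hzA
      · set c := Vφ⁻¹.mulVec y with hcdef
        have hcA' : c ∈ A' t := upperTri_mulVec Vφ⁻¹ hVφinvUT A' hcompat' hord' t hyA
        have hVc : Vφ.mulVec c = y := by
          rw [hcdef, Matrix.mulVec_mulVec, Matrix.mul_nonsing_inv Vφ hVφunit,
            Matrix.one_mulVec]
        have hRc : Rφ.mulVec c = matCol Rφ j := by
          apply hFminj
          rw [Matrix.mulVec_mulVec, hFmRφ, ← Matrix.mulVec_mulVec, hVc, hyw]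
        have hcj : c j ≠ 0 := by
          intro hcj0
          have hc'0 : Rφ.mulVec (c - Pi.single j (1 : F)) = 0 := by
            rw [Matrix.mulVec_sub, hRc, ← matCol_eq_mulVec_single, sub_self]
          set c' : Fin n → F := c - Pi.single j (1 : F) with hc'def
          have hc'j : c' j ≠ 0 := by
            rw [hc'def]
            simp [hcj0]
          set s := Finset.univ.filter (fun k => c' k ≠ 0 ∧ matCol Rφ k ≠ 0) with hs
          obtain ⟨p, hp, -⟩ := key_comb (fun k => matCol Rφ k) s ⟨j, by simp [hs, hc'j, hj]⟩
            (fun a ha => by rw [hs] at ha; exact (Finset.mem_filter.mp ha).2.2)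
            (fun a ha b hb hab => hRφred a b
              (by rw [hs] at ha; exact (Finset.mem_filter.mp ha).2.2)
              (by rw [hs] at hb; exact (Finset.mem_filter.mp hb).2.2) hab)
            c' (fun a ha => by rw [hs] at ha; exact (Finset.mem_filter.mp ha).2.1)
          have hzz : (∑ k ∈ s, c' k • matCol Rφ k) = 0 := by
            rw [hs, ← hsum_filter c', hc'0]
          rw [hzz] at hp
          exact hp rfl
        exact hvmem t j ((memA' t c).mp hcA' j hcj)
    · rintro ⟨h1, h2⟩
      rw [matCol_mul]
      exact hS1 t j h1 h2
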